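/- arXiv:2410.14811 — 2 statements merged into one kernel-verified Lean document; each statement's English description precedes it below -/
import Mathlib

section
/- Let L > 0 and let (x_i, g_i, f_i)_{i∈I} be a finite family in E × E × ℝ. The family is F_{0,L}-interpolable if and only if for every η > 0 there exists a nonempty closed convex (η²L)-smooth set C ⊆ E × ℝ such that for every i ∈ I, the point (x_i/η, f_i) belongs to C and the vector (η·g_i, −1) belongs to N_C((x_i/η, f_i)). -/
open Metric Set
open scoped RealInnerProductSpace

noncomputable section

variable {F : Type*} [NormedAddCommGroup F] [InnerProductSpace ℝ F]

/-- The normal cone of a set `C` at a point `z`. -/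
def normalCone (C : Set F) (z : F) : Set F :=
  {v | ∀ x ∈ C, ⟪v, x - z⟫ ≤ 0}

/-- A set `C` is `β`-smooth if at every boundary point `z`, every unit normal vector `n`
gives a closed ball of radius `1/β` centered at `z - (1/β) n` contained in `C`. -/
def IsSmoothSet (β : ℝ) (C : Set F) : Prop :=
  ∀ z ∈ frontier C, ∀ n ∈ normalCone C z, ‖n‖ = 1 →
    closedBall (z - (1 / β) • n) (1 / β) ⊆ C

/-- `g` is a subgradient of `f` at `x`. -/
def IsSubgradientOf {d : ℕ} (f : EuclideanSpace ℝ (Fin d) → ℝ)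
    (g x : EuclideanSpace ℝ (Fin d)) : Prop :=
  ∀ u, f x + ⟪g, u - x⟫ ≤ f u

/-- The class `F_{μ,L}` of `μ`-strongly convex, `L`-smooth convex functions. -/
def MemFclass {d : ℕ} (μ L : ℝ) (f : EuclideanSpace ℝ (Fin d) → ℝ) : Prop :=
  ConvexOn ℝ Set.univ f ∧
  ∀ x y g, IsSubgradientOf f g x →
    f y ≤ f x + ⟪g, y - x⟫ + L / 2 * ‖y - x‖ ^ 2 ∧
    f x + ⟪g, y - x⟫ + μ / 2 * ‖y - x‖ ^ 2 ≤ f y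

/-- A family `(x_i, g_i, f_i)` is `F_{μ,L}`-interpolable. -/
def FInterpolable {d : ℕ} {ι : Type*} (μ L : ℝ) (x g : ι → EuclideanSpace ℝ (Fin d))
    (fv : ι → ℝ) : Prop :=
  ∃ f : EuclideanSpace ℝ (Fin d) → ℝ, MemFclass μ L f ∧
    ∀ i, f (x i) = fv i ∧ IsSubgradientOf f (g i) (x i)

/-!
Both sides are equivalent to the `F_{0,L}` interpolation conditions
`f i + ⟪g i, x j - x i⟫ + ‖g i - g j‖² / (2L) ≤ f j`.

For functions this is classical: the conditions follow by testing the quadratic upper bound at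
`x j` against the subgradient inequality at `x i`; conversely, the Fenchel conjugate of the
maximum of the `1/L`-strongly convex functions `s ↦ ⟪s, x i⟫ - f i + ‖s - g i‖² / (2L)`
interpolates the data.

For sets, a family of points `z i` with unit normals `n i` is interpolated by a closed convex
`β`-smooth set iff the centres `c i = z i - n i / β` of the inner balls satisfy
`⟪n i, c j - c i⟫ ≤ 0`; then `convexHull {c i} + closedBall 0 (1/β)` works. For the data lifted at
scale `η` (points `z i = (x i / η, f i)`, normals `v i = (η g i, -1)`, `β = η² L`) this condition
reads `⟪g i, x j - x i⟫ - (f j - f i) + ‖v i‖ ‖n i - n j‖² / (2 η² L) ≤ 0`. Since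
`‖v i‖ ‖n i - n j‖² ≤ ‖v i - v j‖² = η² ‖g i - g j‖²`, it follows from the interpolation
conditions; and as `η → 0`, `‖v i‖ ‖n i - n j‖² / η²` tends to `‖g i - g j‖²`, which gives the
converse.
-/

open Filter Topology
open scoped Pointwise

lemma smul_mem_normalCone {C : Set F} {z v : F} {c : ℝ} (hc : 0 ≤ c)
    (hv : v ∈ normalCone C z) : c • v ∈ normalCone C z := fun x hx => by
  rw [real_inner_smul_left]
  exact mul_nonpos_of_nonneg_of_nonpos hc (hv x hx)

lemma mem_normalCone_convexHull {s : Set F} {z v : F} (hv : v ∈ normalCone s z) :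
    v ∈ normalCone (convexHull ℝ s) z := by
  refine fun x hx => convexHull_min (t := {x | ⟪v, x - z⟫ ≤ 0}) hv ?_ hx
  simp only [inner_sub_right, sub_nonpos]
  exact convex_halfSpace_le (innerₛₗ ℝ v).isLinear _

lemma mem_frontier_of_mem_normalCone {C : Set F} {z v : F} (hz : z ∈ C)
    (hv : v ∈ normalCone C z) (hv0 : v ≠ 0) : z ∈ frontier C := by
  refine ⟨subset_closure hz, fun hint => ?_⟩
  have hlim : Tendsto (fun t : ℝ => z + t • v) (𝓝[>] 0) (𝓝 z) := by
    refine tendsto_nhdsWithin_of_tendsto_nhds ?_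
    exact (by fun_prop : Continuous fun t : ℝ => z + t • v).tendsto' 0 z (by simp)
  obtain ⟨t, htC, ht⟩ :=
    ((hlim.eventually (mem_interior_iff_mem_nhds.1 hint)).and self_mem_nhdsWithin).exists
  have := hv _ htC
  rw [add_sub_cancel_left, real_inner_smul_right, real_inner_self_eq_norm_sq] at this
  have : 0 < t * ‖v‖ ^ 2 := mul_pos ht (by positivity)
  linarith

lemma inner_sub_centers_eq {n m z z' : F} (hn : ‖n‖ = 1) (hm : ‖m‖ = 1) (r : ℝ) :
    ⟪n, (z' - r • m) - (z - r • n)⟫ = ⟪n, z' - z⟫ + r / 2 * ‖n - m‖ ^ 2 := by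
  rw [show (z' - r • m) - (z - r • n) = (z' - z) + r • (n - m) by
    simp only [smul_sub]; abel, inner_add_right, real_inner_smul_right, inner_sub_right,
    inner_sub_right, real_inner_self_eq_norm_sq, norm_sub_sq_real, hn, hm]
  ring

lemma IsSmoothSet.inner_sub_centers_nonpos {β : ℝ} {C : Set F} (hC : IsSmoothSet β C) (hβ : 0 ≤ β)
    {z z' n n' : F} (hn : n ∈ normalCone C z) (hn1 : ‖n‖ = 1)
    (hz' : z' ∈ C) (hn' : n' ∈ normalCone C z') (hn'1 : ‖n'‖ = 1) :
    ⟪n, (z' - (1 / β) • n') - (z - (1 / β) • n)⟫ ≤ 0 := by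
  have hfr : z' ∈ frontier C :=
    mem_frontier_of_mem_normalCone hz' hn' (norm_ne_zero_iff.1 (by rw [hn'1]; exact one_ne_zero))
  have hw : z' - (1 / β) • n' + (1 / β) • n ∈ C :=
    hC z' hfr n' hn' hn'1 (by rw [mem_closedBall, dist_eq_norm, add_sub_cancel_left, norm_smul,
      hn1, mul_one, Real.norm_of_nonneg (one_div_nonneg.2 hβ)])
  convert hn _ hw using 2
  abel

lemma isSmoothSet_add_closedBall {K : Set F} {β : ℝ} (hβ : 0 < β)
    (hK : IsClosed (K + closedBall (0 : F) (1 / β))) :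
    IsSmoothSet β (K + closedBall (0 : F) (1 / β)) := by
  intro z hz n hn hn1
  obtain ⟨k, hk, b, hb, rfl⟩ := hK.frontier_subset hz
  have hkn : k + (1 / β) • n ∈ K + closedBall (0 : F) (1 / β) :=
    add_mem_add hk (by simp [norm_smul, hn1, abs_of_pos hβ])
  -- `n` sees `k + n / β ∈ C`, so `⟪n, b⟫ ≥ 1 / β ≥ ‖b‖`: equality in Cauchy–Schwarz
  have hb_eq : b = (1 / β) • n := by
    have h1 := hn _ hkn
    have h2 : ‖b‖ ≤ 1 / β := by simpa using hb
    have : ‖b - (1 / β) • n‖ ^ 2 ≤ 0 := by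
      rw [norm_sub_sq_real, norm_smul, real_inner_smul_right, hn1,
        Real.norm_of_nonneg (by positivity)]
      rw [show k + (1 / β) • n - (k + b) = (1 / β) • n - b by abel, inner_sub_right,
        real_inner_smul_right, real_inner_self_eq_norm_sq, hn1, real_inner_comm] at h1
      nlinarith [norm_nonneg b]
    exact sub_eq_zero.1 (norm_eq_zero.1 (pow_eq_zero_iff two_ne_zero |>.1
      (le_antisymm this (sq_nonneg _))))
  intro w hw
  refine ⟨k, hk, w - k, by simpa [hb_eq, dist_eq_norm] using hw, add_sub_cancel k w⟩

lemma mem_normalCone_add_closedBall {K : Set F} {c n : F} {r : ℝ} (hn : n ∈ normalCone K c)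
    (hn1 : ‖n‖ = 1) : n ∈ normalCone (K + closedBall 0 r) (c + r • n) := by
  rintro _ ⟨a, ha, b, hb, rfl⟩
  have hb' : ⟪n, b⟫ ≤ r := (real_inner_le_norm n b).trans (by simpa [hn1] using hb)
  calc ⟪n, a + b - (c + r • n)⟫ = ⟪n, a - c⟫ + (⟪n, b⟫ - r) := by
        rw [show a + b - (c + r • n) = (a - c) + (b - r • n) by abel, inner_add_right,
          inner_sub_right, inner_sub_right, real_inner_smul_right, real_inner_self_eq_norm_sq,
          hn1, one_pow, mul_one]
    _ ≤ 0 := add_nonpos (hn a ha) (by linarith)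

section SmoothSetInterpolation

variable {ι : Type*}

def SmoothSetInterpolable (β : ℝ) (z v : ι → F) : Prop :=
  ∃ C : Set F, C.Nonempty ∧ IsClosed C ∧ Convex ℝ C ∧ IsSmoothSet β C ∧
    ∀ i, z i ∈ C ∧ v i ∈ normalCone C (z i)

lemma smoothSetInterpolable_normalize_iff {β : ℝ} {z v : ι → F} (hv : ∀ i, v i ≠ 0) :
    SmoothSetInterpolable β z (fun i => ‖v i‖⁻¹ • v i) ↔ SmoothSetInterpolable β z v := by
  refine exists_congr fun C => and_congr_right' <| and_congr_right' <| and_congr_right' <|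
    and_congr_right' <| forall_congr' fun i => and_congr_right' ⟨fun h => ?_, fun h => ?_⟩
  · simpa [smul_smul, mul_inv_cancel₀ (norm_ne_zero_iff.2 (hv i))] using
      smul_mem_normalCone (norm_nonneg (v i)) h
  · exact smul_mem_normalCone (inv_nonneg.2 (norm_nonneg _)) h

theorem smoothSetInterpolable_of_inner_sub_centers_nonpos [Finite ι] {β : ℝ} (hβ : 0 < β)
    {z n : ι → F} (hn1 : ∀ i, ‖n i‖ = 1)
    (h : ∀ i j, ⟪n i, (z j - (1 / β) • n j) - (z i - (1 / β) • n i)⟫ ≤ 0) :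
    SmoothSetInterpolable β z n := by
  rcases isEmpty_or_nonempty ι with hι | ⟨⟨i₀⟩⟩
  · refine ⟨univ, univ_nonempty, isClosed_univ, convex_univ, ?_, isEmptyElim⟩
    simp [IsSmoothSet]
  set k := fun i => z i - (1 / β) • n i
  have hz : ∀ i, z i = k i + (1 / β) • n i := fun i => (sub_add_cancel _ _).symm
  set C := convexHull ℝ (range k) + closedBall (0 : F) (1 / β)
  have hC : IsClosed C :=
    isClosed_closedBall.add_left_of_isCompact ((finite_range k).isCompact_convexHull ℝ)
  have hzC : ∀ i, z i ∈ C := fun i => by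
    rw [hz]
    exact add_mem_add (subset_convexHull ℝ _ ⟨i, rfl⟩) (by simp [norm_smul, hn1, abs_of_pos hβ])
  refine ⟨C, ⟨z i₀, hzC i₀⟩, hC, (convex_convexHull ℝ _).add (convex_closedBall _ _),
    isSmoothSet_add_closedBall hβ hC, fun i => ⟨hzC i, ?_⟩⟩
  rw [hz]
  refine mem_normalCone_add_closedBall (mem_normalCone_convexHull ?_) (hn1 i)
  rintro _ ⟨j, rfl⟩
  exact h i j

theorem smoothSetInterpolable_iff_inner_sub_centers_nonpos [Finite ι] {β : ℝ} (hβ : 0 < β)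
    {z n : ι → F} (hn1 : ∀ i, ‖n i‖ = 1) :
    SmoothSetInterpolable β z n ↔
      ∀ i j, ⟪n i, (z j - (1 / β) • n j) - (z i - (1 / β) • n i)⟫ ≤ 0 := by
  refine ⟨fun ⟨C, _, _, _, hC, hzn⟩ i j => ?_,
    smoothSetInterpolable_of_inner_sub_centers_nonpos hβ hn1⟩
  exact hC.inner_sub_centers_nonpos hβ.le (hzn i).2 (hn1 i) (hzn j).1 (hzn j).2 (hn1 j)

lemma norm_mul_norm_sub_normalize_sq_le {v w : F} (hw : 1 ≤ ‖w‖) :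
    ‖v‖ * ‖‖v‖⁻¹ • v - ‖w‖⁻¹ • w‖ ^ 2 ≤ ‖v - w‖ ^ 2 := by
  rcases eq_or_ne v 0 with rfl | hv
  · simp
  have hw0 : w ≠ 0 := norm_pos_iff.1 (by linarith)
  have hwinv : ‖w‖ * ‖w‖⁻¹ = 1 := mul_inv_cancel₀ (by positivity)
  have hcs : ⟪v, w⟫ ≤ ‖v‖ * ‖w‖ := real_inner_le_norm v w
  have hv1 : ‖‖v‖⁻¹ • v‖ = 1 := norm_smul_inv_norm hv
  have hw1 : ‖‖w‖⁻¹ • w‖ = 1 := norm_smul_inv_norm hw0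
  rw [norm_sub_sq_real, norm_sub_sq_real, hv1, hw1,
    real_inner_smul_left, real_inner_smul_right]
  have hvinv : ‖v‖ * (‖v‖⁻¹ * (‖w‖⁻¹ * ⟪v, w⟫)) = ‖w‖⁻¹ * ⟪v, w⟫ := by
    rw [← mul_assoc, mul_inv_cancel₀ (norm_ne_zero_iff.2 hv), one_mul]
  have hwinv1 : ‖w‖⁻¹ ≤ 1 := inv_le_one_of_one_le₀ hw
  nlinarith [sq_nonneg (‖v‖ - ‖w‖), mul_nonneg (sub_nonneg.2 hcs) (sub_nonneg.2 hwinv1)]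

def graphPoint (η : ℝ) (x : F) (f : ℝ) : WithLp 2 (F × ℝ) :=
  (WithLp.equiv 2 (F × ℝ)).symm (η⁻¹ • x, f)

def graphNormal (η : ℝ) (g : F) : WithLp 2 (F × ℝ) :=
  (WithLp.equiv 2 (F × ℝ)).symm (η • g, -1)

lemma inner_graphNormal_graphPoint_sub {η : ℝ} (hη : η ≠ 0) (g x y : F) (a b : ℝ) :
    ⟪graphNormal η g, graphPoint η y b - graphPoint η x a⟫ = ⟪g, y - x⟫ - (b - a) := by
  simp [graphNormal, graphPoint, WithLp.prod_inner_apply, ← smul_sub, real_inner_smul_left,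
    real_inner_smul_right, hη]
  ring

lemma norm_graphNormal_sub_sq (η : ℝ) (g g' : F) :
    ‖graphNormal η g - graphNormal η g'‖ ^ 2 = η ^ 2 * ‖g - g'‖ ^ 2 := by
  simp [graphNormal, WithLp.prod_norm_sq_eq_of_L2, ← smul_sub, norm_smul, mul_pow]

lemma norm_graphNormal_sq (η : ℝ) (g : F) : ‖graphNormal η g‖ ^ 2 = 1 + η ^ 2 * ‖g‖ ^ 2 := by
  simp [graphNormal, WithLp.prod_norm_sq_eq_of_L2, norm_smul, mul_pow, add_comm]

lemma norm_graphNormal (η : ℝ) (g : F) : ‖graphNormal η g‖ = √(1 + η ^ 2 * ‖g‖ ^ 2) := by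
  rw [← norm_graphNormal_sq, Real.sqrt_sq (norm_nonneg _)]

lemma one_le_norm_graphNormal (η : ℝ) (g : F) : 1 ≤ ‖graphNormal η g‖ := by
  rw [norm_graphNormal]
  exact Real.one_le_sqrt.2 (le_add_of_nonneg_right (by positivity))

lemma graphNormal_ne_zero (η : ℝ) (g : F) : graphNormal η g ≠ 0 :=
  norm_pos_iff.1 (one_pos.trans_le (one_le_norm_graphNormal η g))

def graphUnitNormal (η : ℝ) (g : F) : WithLp 2 (F × ℝ) :=
  ‖graphNormal η g‖⁻¹ • graphNormal η g

lemma norm_graphUnitNormal (η : ℝ) (g : F) : ‖graphUnitNormal η g‖ = 1 :=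
  norm_smul_inv_norm (graphNormal_ne_zero η g)

lemma norm_graphNormal_mul_inner_sub_centers {η : ℝ} (hη : η ≠ 0) (r : ℝ) (g g' x x' : F)
    (a a' : ℝ) :
    ‖graphNormal η g‖ * ⟪graphUnitNormal η g, (graphPoint η x' a' - r • graphUnitNormal η g') -
        (graphPoint η x a - r • graphUnitNormal η g)⟫ =
      ⟪g, x' - x⟫ - (a' - a) +
        r / 2 * (‖graphNormal η g‖ * ‖graphUnitNormal η g - graphUnitNormal η g'‖ ^ 2) := by
  rw [inner_sub_centers_eq (norm_graphUnitNormal η g) (norm_graphUnitNormal η g'), graphUnitNormal,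
    real_inner_smul_left, ← inner_graphNormal_graphPoint_sub hη]
  field_simp [norm_ne_zero_iff.2 (graphNormal_ne_zero η g)]

theorem smoothSetInterpolable_graph_iff [Finite ι] {L η : ℝ} (hL : 0 < L) (hη : 0 < η)
    (x g : ι → F) (fv : ι → ℝ) :
    SmoothSetInterpolable (η ^ 2 * L) (fun i => graphPoint η (x i) (fv i))
        (fun i => graphNormal η (g i)) ↔
      ∀ i j, ⟪g i, x j - x i⟫ - (fv j - fv i) + 1 / (η ^ 2 * L) / 2 *
        (‖graphNormal η (g i)‖ * ‖graphUnitNormal η (g i) - graphUnitNormal η (g j)‖ ^ 2) ≤ 0 := by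
  rw [← smoothSetInterpolable_normalize_iff fun i => graphNormal_ne_zero η (g i)]
  refine (smoothSetInterpolable_iff_inner_sub_centers_nonpos (n := fun i => graphUnitNormal η (g i))
    (by positivity) fun i => norm_graphUnitNormal η (g i)).trans (forall₂_congr fun i j => ?_)
  rw [← norm_graphNormal_mul_inner_sub_centers hη.ne']
  have hpos : 0 < ‖graphNormal η (g i)‖ := one_pos.trans_le (one_le_norm_graphNormal η (g i))
  exact ⟨mul_nonpos_of_nonneg_of_nonpos hpos.le, fun h => nonpos_of_mul_nonpos_right h hpos⟩

def InterpolationConditions (L : ℝ) (x g : ι → F) (fv : ι → ℝ) : Prop :=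
  ∀ i j, fv i + ⟪g i, x j - x i⟫ + ‖g i - g j‖ ^ 2 / (2 * L) ≤ fv j

theorem InterpolationConditions.smoothSetInterpolable_graph [Finite ι] {L η : ℝ} (hL : 0 < L)
    (hη : 0 < η) {x g : ι → F} {fv : ι → ℝ} (h : InterpolationConditions L x g fv) :
    SmoothSetInterpolable (η ^ 2 * L) (fun i => graphPoint η (x i) (fv i))
      (fun i => graphNormal η (g i)) := by
  refine (smoothSetInterpolable_graph_iff hL hη x g fv).2 fun i j => ?_
  have hnormal : ‖graphNormal η (g i)‖ * ‖graphUnitNormal η (g i) - graphUnitNormal η (g j)‖ ^ 2 ≤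
      η ^ 2 * ‖g i - g j‖ ^ 2 :=
    (norm_mul_norm_sub_normalize_sq_le (one_le_norm_graphNormal η (g j))).trans_eq
      (norm_graphNormal_sub_sq η _ _)
  calc ⟪g i, x j - x i⟫ - (fv j - fv i) + 1 / (η ^ 2 * L) / 2 *
        (‖graphNormal η (g i)‖ * ‖graphUnitNormal η (g i) - graphUnitNormal η (g j)‖ ^ 2)
      ≤ ⟪g i, x j - x i⟫ - (fv j - fv i) + 1 / (η ^ 2 * L) / 2 * (η ^ 2 * ‖g i - g j‖ ^ 2) := by
        gcongr
    _ = fv i + ⟪g i, x j - x i⟫ + ‖g i - g j‖ ^ 2 / (2 * L) - fv j := by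
        field_simp
        ring
    _ ≤ 0 := sub_nonpos.2 (h i j)

lemma sq_mul_norm_sub_le_norm_graphUnitNormal_sub (η : ℝ) (g g' : F) :
    η ^ 2 * ‖‖graphNormal η g‖⁻¹ • g - ‖graphNormal η g'‖⁻¹ • g'‖ ^ 2 ≤
      ‖graphUnitNormal η g - graphUnitNormal η g'‖ ^ 2 := by
  have hfst : (graphUnitNormal η g - graphUnitNormal η g').fst =
      η • (‖graphNormal η g‖⁻¹ • g - ‖graphNormal η g'‖⁻¹ • g') := by
    simp only [graphUnitNormal, WithLp.sub_fst, WithLp.smul_fst, graphNormal,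
      WithLp.equiv_symm_apply, WithLp.toLp_fst, smul_sub, smul_comm η]
  rw [WithLp.prod_norm_sq_eq_of_L2, hfst, norm_smul, mul_pow, Real.norm_eq_abs, sq_abs]
  exact le_add_of_nonneg_right (sq_nonneg _)

lemma tendsto_norm_inv_norm_graphNormal_smul_sub_sq (g g' : F) :
    Tendsto (fun η => ‖‖graphNormal η g‖⁻¹ • g - ‖graphNormal η g'‖⁻¹ • g'‖ ^ 2) (𝓝 0)
      (𝓝 (‖g - g'‖ ^ 2)) := by
  have hcont : ∀ g : F, Continuous fun η : ℝ => ‖graphNormal η g‖⁻¹ := fun g => by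
    simp only [norm_graphNormal]
    exact (by fun_prop : Continuous fun η : ℝ => √(1 + η ^ 2 * ‖g‖ ^ 2)).inv₀
      fun η => (Real.sqrt_pos.2 (by positivity)).ne'
  have hg := hcont g
  have hg' := hcont g'
  have : Continuous fun η : ℝ => ‖‖graphNormal η g‖⁻¹ • g - ‖graphNormal η g'‖⁻¹ • g'‖ ^ 2 := by
    fun_prop
  simpa [norm_graphNormal] using this.tendsto 0

theorem interpolationConditions_of_forall_smoothSetInterpolable_graph [Finite ι] {L : ℝ}
    (hL : 0 < L) {x g : ι → F} {fv : ι → ℝ}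
    (H : ∀ η, 0 < η → SmoothSetInterpolable (η ^ 2 * L) (fun i => graphPoint η (x i) (fv i))
      (fun i => graphNormal η (g i))) :
    InterpolationConditions L x g fv := by
  intro i j
  set φ := fun η => ‖‖graphNormal η (g i)‖⁻¹ • g i - ‖graphNormal η (g j)‖⁻¹ • g j‖ ^ 2
  have hbound : ∀ η, 0 < η → φ η / (2 * L) ≤ fv j - fv i - ⟪g i, x j - x i⟫ := by
    intro η hη
    have hset := (smoothSetInterpolable_graph_iff hL hη x g fv).1 (H η hη) i j
    set M := ‖graphUnitNormal η (g i) - graphUnitNormal η (g j)‖ ^ 2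
    calc φ η / (2 * L) = 1 / (η ^ 2 * L) / 2 * (η ^ 2 * φ η) := by
          field_simp
      _ ≤ 1 / (η ^ 2 * L) / 2 * M := by
          gcongr
          exact sq_mul_norm_sub_le_norm_graphUnitNormal_sub η (g i) (g j)
      _ ≤ 1 / (η ^ 2 * L) / 2 * (‖graphNormal η (g i)‖ * M) := by
          gcongr
          exact le_mul_of_one_le_left (sq_nonneg _) (one_le_norm_graphNormal η (g i))
      _ ≤ _ := by linarith
  have := le_of_tendsto
    (((tendsto_norm_inv_norm_graphNormal_smul_sub_sq (g i) (g j)).div_const (2 * L)).mono_left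
      nhdsWithin_le_nhds) (eventually_nhdsWithin_of_forall (s := Ioi 0) hbound)
  linarith

end SmoothSetInterpolation

section Conjugate

-- `⨆` of a family unbounded above is `0` by convention.
def fenchelConjugate (h : F → ℝ) (y : F) : ℝ :=
  ⨆ s, (⟪y, s⟫ - h s)

/-- The Fenchel conjugate of the quadratic upper model `y ↦ c + ⟪g, y - x⟫ + L/2 ‖y - x‖²`. -/
def dualQuadratic (L : ℝ) (x g : F) (c : ℝ) (s : F) : ℝ :=
  ⟪s, x⟫ - c + ‖s - g‖ ^ 2 / (2 * L)

variable {L : ℝ} {h : F → ℝ}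

lemma inner_le_add_norm_sq (hL : 0 < L) (u v : F) :
    ⟪u, v⟫ ≤ L / 2 * ‖u‖ ^ 2 + ‖v‖ ^ 2 / (2 * L) := by
  have h : 0 ≤ (L * ‖u‖ - ‖v‖) ^ 2 / (2 * L) := by positivity
  calc ⟪u, v⟫ ≤ ‖u‖ * ‖v‖ := real_inner_le_norm u v
    _ = L / 2 * ‖u‖ ^ 2 + ‖v‖ ^ 2 / (2 * L) - (L * ‖u‖ - ‖v‖) ^ 2 / (2 * L) := by
      field_simp
      ring
    _ ≤ _ := sub_le_self _ h

lemma inner_sub_dualQuadratic_le (hL : 0 < L) (x g : F) (c : ℝ) (y s : F) :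
    ⟪y, s⟫ - dualQuadratic L x g c s ≤ c + ⟪g, y - x⟫ + L / 2 * ‖y - x‖ ^ 2 := by
  have h := inner_le_add_norm_sq hL (y - x) (s - g)
  rw [inner_sub_left, inner_sub_right, inner_sub_right] at h
  rw [dualQuadratic, inner_sub_right]
  linarith [real_inner_comm g y, real_inner_comm g x, real_inner_comm s x]

lemma dualQuadratic_eq_add_inner_add (hL : 0 < L) (x g : F) (c : ℝ) (s₀ s : F) :
    dualQuadratic L x g c s = dualQuadratic L x g c s₀ + ⟪s - s₀, x + L⁻¹ • (s₀ - g)⟫ +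
      ‖s - s₀‖ ^ 2 / (2 * L) := by
  have hs : s - g = (s - s₀) + (s₀ - g) := by abel
  have hx : ⟪s, x⟫ = ⟪s₀, x⟫ + ⟪s - s₀, x⟫ := by rw [inner_sub_left]; ring
  rw [dualQuadratic, dualQuadratic, hs, norm_add_sq_real, inner_add_right, real_inner_smul_right,
    hx]
  field_simp
  ring

lemma strongConvexOn_dualQuadratic (hL : 0 < L) (x g : F) (c : ℝ) :
    StrongConvexOn univ L⁻¹ (dualQuadratic L x g c) := by
  have h : (fun s => dualQuadratic L x g c s - L⁻¹ / 2 * ‖s‖ ^ 2) =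
      fun s => innerₛₗ ℝ (x - L⁻¹ • g) s + (‖g‖ ^ 2 / (2 * L) - c) := by
    ext s
    simp only [dualQuadratic, norm_sub_sq_real, innerₛₗ_apply_apply, inner_sub_left,
      real_inner_smul_left, real_inner_comm g, real_inner_comm x]
    field_simp
    ring
  rw [strongConvexOn_iff_convex, h]
  exact ((innerₛₗ ℝ (x - L⁻¹ • g)).convexOn convex_univ).add_const _

lemma UniformConvexOn.sup {s : Set F} {φ : ℝ → ℝ} {f f' : F → ℝ} (hf : UniformConvexOn s φ f)
    (hf' : UniformConvexOn s φ f') : UniformConvexOn s φ (f ⊔ f') := by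
  refine ⟨hf.1, fun x hx y hy a b ha hb hab => sup_le ?_ ?_⟩
  · calc f (a • x + b • y) ≤ a • f x + b • f y - a * b * φ ‖x - y‖ := hf.2 hx hy ha hb hab
      _ ≤ a • (f ⊔ f') x + b • (f ⊔ f') y - a * b * φ ‖x - y‖ := by
        gcongr <;> exact le_sup_left
  · calc f' (a • x + b • y) ≤ a • f' x + b • f' y - a * b * φ ‖x - y‖ := hf'.2 hx hy ha hb hab
      _ ≤ a • (f ⊔ f') x + b • (f ⊔ f') y - a * b * φ ‖x - y‖ := by
        gcongr <;> exact le_sup_right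

/-- Along the segment from `g` to `s` the subgradient inequality and strong convexity squeeze
`h`; letting the step size tend to `0` leaves the quadratic term. -/
lemma StrongConvexOn.add_inner_add_le {m : ℝ} (hh : StrongConvexOn univ m h)
    {x g : F} (hx : ∀ s, h g + ⟪x, s - g⟫ ≤ h s) (s : F) :
    h g + ⟪x, s - g⟫ + m / 2 * ‖s - g‖ ^ 2 ≤ h s := by
  have hstep : ∀ t ∈ Ioo (0 : ℝ) 1,
      h g + ⟪x, s - g⟫ + m / 2 * ‖s - g‖ ^ 2 ≤ h s + t * (m / 2 * ‖s - g‖ ^ 2) := by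
    rintro t ⟨ht0, ht1⟩
    have hconv := hh.2 (mem_univ g) (mem_univ s) (sub_nonneg.2 ht1.le) ht0.le (sub_add_cancel 1 t)
    have hsub := hx ((1 - t) • g + t • s)
    rw [show (1 - t) • g + t • s - g = t • (s - g) by module, real_inner_smul_right] at hsub
    simp only [smul_eq_mul, norm_sub_rev g s] at hconv
    nlinarith
  have hlim : Tendsto (fun t : ℝ => h s + t * (m / 2 * ‖s - g‖ ^ 2)) (𝓝[>] 0) (𝓝 (h s)) :=
    tendsto_nhdsWithin_of_tendsto_nhds (by simpa using (by fun_prop :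
      Continuous fun t : ℝ => h s + t * (m / 2 * ‖s - g‖ ^ 2)).tendsto 0)
  exact ge_of_tendsto hlim (eventually_of_mem (Ioo_mem_nhdsGT one_pos) hstep)

lemma bddAbove_inner_sub_of_dualQuadratic_le (hL : 0 < L) {x g : F} {c : ℝ}
    (hq : ∀ s, dualQuadratic L x g c s ≤ h s) (y : F) :
    BddAbove (range fun s => ⟪y, s⟫ - h s) :=
  ⟨_, forall_mem_range.2 fun s =>
    (sub_le_sub_left (hq s) _).trans (inner_sub_dualQuadratic_le hL x g c y s)⟩

lemma fenchelConjugate_le_of_dualQuadratic_le (hL : 0 < L) {x g : F} {c : ℝ}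
    (hq : ∀ s, dualQuadratic L x g c s ≤ h s) (y : F) :
    fenchelConjugate h y ≤ c + ⟪g, y - x⟫ + L / 2 * ‖y - x‖ ^ 2 :=
  ciSup_le fun s => (sub_le_sub_left (hq s) _).trans (inner_sub_dualQuadratic_le hL x g c y s)

lemma convexOn_fenchelConjugate (hb : ∀ y, BddAbove (range fun s => ⟪y, s⟫ - h s)) :
    ConvexOn ℝ univ (fenchelConjugate h) := by
  refine ⟨convex_univ, fun y _ y' _ a b ha hb' hab => ciSup_le fun s => ?_⟩
  calc ⟪a • y + b • y', s⟫ - h s = a * (⟪y, s⟫ - h s) + b * (⟪y', s⟫ - h s) := by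
        rw [inner_add_left, real_inner_smul_left, real_inner_smul_left]
        linear_combination (h s) * hab
    _ ≤ a * fenchelConjugate h y + b * fenchelConjugate h y' := by
        gcongr <;> exact le_ciSup (hb _) s

-- `x + L⁻¹ • (s₀ - g)` is the gradient at `s₀` of the piece active there.
lemma fenchelConjugate_le_of_dualQuadratic_eq (hL : 0 < L) {x g s₀ : F} {c : ℝ}
    (hq : ∀ s, dualQuadratic L x g c s ≤ h s) (hs₀ : h s₀ = dualQuadratic L x g c s₀) :
    fenchelConjugate h (x + L⁻¹ • (s₀ - g)) ≤ ⟪x + L⁻¹ • (s₀ - g), s₀⟫ - h s₀ := by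
  refine ciSup_le fun s => ?_
  have hexp := dualQuadratic_eq_add_inner_add hL x g c s₀ s
  have hsq : 0 ≤ ‖s - s₀‖ ^ 2 / (2 * L) := by positivity
  rw [inner_sub_left, real_inner_comm _ s, real_inner_comm _ s₀] at hexp
  linarith [hq s]

lemma fenchelConjugate_eq_of_dualQuadratic_eq (hL : 0 < L) {x g s₀ y : F} {c : ℝ}
    (hq : ∀ s, dualQuadratic L x g c s ≤ h s) (hs₀ : h s₀ = dualQuadratic L x g c s₀)
    (hsub : ∀ u, fenchelConjugate h y + ⟪s₀, u - y⟫ ≤ fenchelConjugate h u) :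
    fenchelConjugate h y = ⟪y, s₀⟫ - h s₀ := by
  refine le_antisymm ?_ (le_ciSup (bddAbove_inner_sub_of_dualQuadratic_le hL hq y) s₀)
  have hcap := fenchelConjugate_le_of_dualQuadratic_eq hL hq hs₀
  have := hsub (x + L⁻¹ • (s₀ - g))
  rw [inner_sub_right] at this
  linarith [real_inner_comm s₀ y, real_inner_comm s₀ (x + L⁻¹ • (s₀ - g))]

lemma dualQuadratic_le_of_fenchelConjugate_eq (hL : 0 < L) (hh : StrongConvexOn univ L⁻¹ h)
    {y s₀ : F} (hb : BddAbove (range fun s => ⟪y, s⟫ - h s))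
    (hfen : fenchelConjugate h y = ⟪y, s₀⟫ - h s₀) (s : F) :
    dualQuadratic L y s₀ (fenchelConjugate h y) s ≤ h s := by
  have hsub : ∀ s, h s₀ + ⟪y, s - s₀⟫ ≤ h s := fun s => by
    have : ⟪y, s⟫ - h s ≤ fenchelConjugate h y := le_ciSup hb s
    rw [inner_sub_right]
    linarith
  have hquad := hh.add_inner_add_le hsub s
  have hL2 : L⁻¹ / 2 * ‖s - s₀‖ ^ 2 = ‖s - s₀‖ ^ 2 / (2 * L) := by field_simp
  rw [inner_sub_right] at hquad
  rw [dualQuadratic, hfen, real_inner_comm y s]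
  linarith

end Conjugate

theorem memFclass_fenchelConjugate_sup' {d : ℕ} {κ : Type*} {t : Finset κ} (ht : t.Nonempty)
    {L : ℝ} (hL : 0 < L) (x g : κ → EuclideanSpace ℝ (Fin d)) (c : κ → ℝ) :
    MemFclass 0 L (fenchelConjugate (t.sup' ht fun k => dualQuadratic L (x k) (g k) (c k))) := by
  have hact : ∀ s, ∃ k ∈ t, (t.sup' ht fun k => dualQuadratic L (x k) (g k) (c k)) s =
      dualQuadratic L (x k) (g k) (c k) s := fun s => by
    rw [Finset.sup'_apply]
    exact Finset.exists_mem_eq_sup' ht _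
  have hstrong : StrongConvexOn univ L⁻¹ (t.sup' ht fun k => dualQuadratic L (x k) (g k) (c k)) :=
    Finset.sup'_induction _ _ (fun _ h₁ _ h₂ => h₁.sup h₂)
      fun k _ => strongConvexOn_dualQuadratic hL (x k) (g k) (c k)
  set h := t.sup' ht fun k => dualQuadratic L (x k) (g k) (c k)
  have hle : ∀ k ∈ t, ∀ s, dualQuadratic L (x k) (g k) (c k) s ≤ h s := fun k hk =>
    Finset.le_sup' (fun k => dualQuadratic L (x k) (g k) (c k)) hk
  obtain ⟨k₀, hk₀⟩ := ht
  have hbdd := bddAbove_inner_sub_of_dualQuadratic_le hL (hle k₀ hk₀)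
  refine ⟨convexOn_fenchelConjugate hbdd, fun y y' s₀ hsub => ⟨?_, by simpa using hsub y'⟩⟩
  obtain ⟨k, hk, hks⟩ := hact s₀
  have hfen := fenchelConjugate_eq_of_dualQuadratic_eq hL (hle k hk) hks hsub
  exact fenchelConjugate_le_of_dualQuadratic_le hL
    (dualQuadratic_le_of_fenchelConjugate_eq hL hstrong (hbdd y) hfen) y'

section Interpolation

variable {d : ℕ} {ι : Type*} {L : ℝ} {x g : ι → EuclideanSpace ℝ (Fin d)} {fv : ι → ℝ}

theorem FInterpolable.interpolationConditions {μ : ℝ} (hL : 0 < L)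
    (h : FInterpolable μ L x g fv) : InterpolationConditions L x g fv := by
  obtain ⟨f, ⟨-, hf⟩, hfx⟩ := h
  intro i j
  rw [norm_sub_rev]
  set w := g j - g i
  have hup := (hf (x j) (x j - L⁻¹ • w) (g j) (hfx j).2).1
  have hsub := (hfx i).2 (x j - L⁻¹ • w)
  rw [(hfx i).1] at hsub
  rw [(hfx j).1, sub_sub_cancel_left, inner_neg_right, norm_neg, norm_smul, real_inner_smul_right,
    Real.norm_of_nonneg (inv_nonneg.2 hL.le)] at hup
  rw [sub_right_comm, inner_sub_right, real_inner_smul_right] at hsub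
  have hw : L⁻¹ * ⟪g j, w⟫ - L⁻¹ * ⟪g i, w⟫ = L⁻¹ * ‖w‖ ^ 2 := by
    rw [← mul_sub, ← inner_sub_left, real_inner_self_eq_norm_sq]
  have hL2 : L / 2 * (L⁻¹ * ‖w‖) ^ 2 = L⁻¹ * ‖w‖ ^ 2 - ‖w‖ ^ 2 / (2 * L) := by field_simp; ring
  linarith

/-- The interpolation conditions say exactly that the `j`-th piece of the maximum is the active
one at `g j`. -/
theorem InterpolationConditions.finterpolable [Finite ι] (hL : 0 < L)
    (h : InterpolationConditions L x g fv) : FInterpolable 0 L x g fv := by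
  have := Fintype.ofFinite ι
  rcases isEmpty_or_nonempty ι with hι | hι
  · exact ⟨_, memFclass_fenchelConjugate_sup' (Finset.univ_nonempty (α := Unit)) hL 0 0 0,
      isEmptyElim⟩
  set q := Finset.univ.sup' Finset.univ_nonempty fun i => dualQuadratic L (x i) (g i) (fv i)
  have hle : ∀ i s, dualQuadratic L (x i) (g i) (fv i) s ≤ q s := fun i =>
    Finset.le_sup' (fun i => dualQuadratic L (x i) (g i) (fv i)) (Finset.mem_univ i)
  have hq : ∀ j, q (g j) = ⟪g j, x j⟫ - fv j := fun j => by
    refine le_antisymm ?_ (by simpa [dualQuadratic] using hle j (g j))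
    simp only [q, Finset.sup'_apply]
    refine Finset.sup'_le _ _ fun i _ => ?_
    have := h j i
    rw [inner_sub_right] at this
    simp only [dualQuadratic]
    linarith
  have hlow : ∀ j u, fv j + ⟪g j, u - x j⟫ ≤ fenchelConjugate q u := fun j u => by
    have : ⟪u, g j⟫ - q (g j) ≤ fenchelConjugate q u :=
      le_ciSup (bddAbove_inner_sub_of_dualQuadratic_le hL (hle j) u) (g j)
    rw [inner_sub_right, real_inner_comm u]
    linarith [hq j]
  have hval : ∀ j, fenchelConjugate q (x j) = fv j := fun j =>
    le_antisymm (by simpa using fenchelConjugate_le_of_dualQuadratic_le hL (hle j) (x j))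
      (by simpa using hlow j (x j))
  exact ⟨_, memFclass_fenchelConjugate_sup' Finset.univ_nonempty hL x g fv,
    fun j => ⟨hval j, fun u => (hval j).symm ▸ hlow j u⟩⟩

theorem finterpolable_iff_interpolationConditions [Finite ι] (hL : 0 < L) :
    FInterpolable 0 L x g fv ↔ InterpolationConditions L x g fv :=
  ⟨FInterpolable.interpolationConditions hL, InterpolationConditions.finterpolable hL⟩

end Interpolation

theorem smooth_interpolation_as_set_interpolation_general {d : ℕ} {ι : Type*}
    [Fintype ι] (L : ℝ) (hL : 0 < L) (x g : ι → EuclideanSpace ℝ (Fin d)) (fv : ι → ℝ) :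
    FInterpolable 0 L x g fv ↔
      ∀ η : ℝ, 0 < η →
        ∃ C : Set (WithLp 2 (EuclideanSpace ℝ (Fin d) × ℝ)), C.Nonempty ∧ IsClosed C ∧
          Convex ℝ C ∧ IsSmoothSet (η ^ 2 * L) C ∧
          ∀ i, (WithLp.equiv 2 (EuclideanSpace ℝ (Fin d) × ℝ)).symm (η⁻¹ • x i, fv i) ∈ C ∧
            (WithLp.equiv 2 (EuclideanSpace ℝ (Fin d) × ℝ)).symm (η • g i, (-1 : ℝ)) ∈
              normalCone C
                ((WithLp.equiv 2 (EuclideanSpace ℝ (Fin d) × ℝ)).symm (η⁻¹ • x i, fv i)) := by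
  rw [finterpolable_iff_interpolationConditions hL]
  exact ⟨fun h η hη => h.smoothSetInterpolable_graph hL hη,
    interpolationConditions_of_forall_smoothSetInterpolable_graph hL⟩

/-- Smooth function interpolation via smooth set interpolation at every scale:
`(x_i, g_i, f_i)` is `F_{0,L}`-interpolable iff for every `η > 0` there is a nonempty
closed convex `(η²L)`-smooth set `C ⊆ E × ℝ` containing the points `(x_i/η, f_i)`
with `(η g_i, -1)` a normal vector there. -/
theorem smooth_interpolation_as_set_interpolation {d : ℕ} (hd : 1 ≤ d) {ι : Type*}
    [Fintype ι] (L : ℝ) (hL : 0 < L) (x g : ι → EuclideanSpace ℝ (Fin d)) (fv : ι → ℝ) :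
    FInterpolable 0 L x g fv ↔
      ∀ η : ℝ, 0 < η →
        ∃ C : Set (WithLp 2 (EuclideanSpace ℝ (Fin d) × ℝ)), C.Nonempty ∧ IsClosed C ∧
          Convex ℝ C ∧ IsSmoothSet (η ^ 2 * L) C ∧
          ∀ i, (WithLp.equiv 2 (EuclideanSpace ℝ (Fin d) × ℝ)).symm (η⁻¹ • x i, fv i) ∈ C ∧
            (WithLp.equiv 2 (EuclideanSpace ℝ (Fin d) × ℝ)).symm (η • g i, (-1 : ℝ)) ∈
              normalCone C
                ((WithLp.equiv 2 (EuclideanSpace ℝ (Fin d) × ℝ)).symm (η⁻¹ • x i, fv i)) :=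
  smooth_interpolation_as_set_interpolation_general L hL x g fv
end
end

section
/- Let β > 0, δ ≥ 0, R > 0, and set h = max(δ, 1/β). Let C ⊆ E be a nonempty closed convex β-smooth set, q ∈ E with closedBall(q, δ) ⊆ C, and x₀ ∈ E with ‖x₀ − q‖ ≤ R. Suppose x₁, …, x_N are generated by x_{i+1} = x_i − h·n_i, where for each 0 ≤ i ≤ N−1, n_i is a unit vector satisfying ⟪n_i, y − x_i⟫ ≤ 0 for all y ∈ C, and suppose x_N does not belong to the interior of C. Then (N + 1)·h² ≤ (R + h − δ)². -/
open Metric Set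
open scoped RealInnerProductSpace Pointwise

noncomputable section

variable {F : Type*} [NormedAddCommGroup F] [InnerProductSpace ℝ F]

/-- A set `C` is `α`-strongly convex if at every boundary point `z`, every unit normal
vector `n` gives a closed ball of radius `1/α` centered at `z - (1/α) n` containing `C`. -/
def IsStronglyConvexSet (α : ℝ) (C : Set F) : Prop :=
  ∀ z ∈ frontier C, ∀ n ∈ normalCone C z, ‖n‖ = 1 →
    C ⊆ closedBall (z - (1 / α) • n) (1 / α)

/-- `diam C ≤ D`, expressed pointwise. -/
def DiamLE (C : Set F) (D : ℝ) : Prop :=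
  ∀ x ∈ C, ∀ y ∈ C, ‖x - y‖ ≤ D

/-- The `δ`-interior of a set: points whose closed `δ`-ball lies inside the set. -/
def deltaInterior (δ : ℝ) (C : Set F) : Set F :=
  {x | closedBall x δ ⊆ C}

/-- The set `C` interpolates the data: `z i ∈ C` with normal vector `v i`, and
`x k` lies in the `δ k`-interior of `C`. -/
def InterpolatedBy {ι κ : Type*} (C : Set F) (z v : ι → F) (x : κ → F) (δ : κ → ℝ) : Prop :=
  (∀ i, z i ∈ C ∧ v i ∈ normalCone C (z i)) ∧ ∀ k, x k ∈ deltaInterior (δ k) C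

/-- The interpolation conditions `Interp(α, β, D; λ)`, with `n i = v i / ‖v i‖`,
`r = 1/α - 1/β` and `s k = max 0 (δ k - 1/β)`. -/
def InterpCond {ι κ : Type*} (α β D lam : ℝ) (z v : ι → F) (x : κ → F) (δ : κ → ℝ) : Prop :=
  ∃ w : κ → F,
    (∀ i j, ‖z i - (1 / α) • (‖v i‖⁻¹ • v i) - (z j - (1 / β) • (‖v j‖⁻¹ • v j))‖ ≤
      1 / α - 1 / β) ∧
    (∀ i k, ‖z i - (1 / α) • (‖v i‖⁻¹ • v i) - w k‖ ≤
      (1 / α - 1 / β) - max 0 (δ k - 1 / β)) ∧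
    (∀ k, ‖x k - w k‖ ≤ 1 / β - δ k + max 0 (δ k - 1 / β)) ∧
    (∀ i j, ‖z i - (1 / β) • (‖v i‖⁻¹ • v i) - (z j - (1 / β) • (‖v j‖⁻¹ • v j))‖ ≤
      lam * (D - 2 / β)) ∧
    (∀ i k, ‖z i - (1 / β) • (‖v i‖⁻¹ • v i) - w k‖ ≤
      lam * (D - 2 / β) - max 0 (δ k - 1 / β)) ∧
    (∀ k l, ‖w k - w l‖ ≤ lam * (D - 2 / β) - max 0 (δ k - 1 / β) - max 0 (δ l - 1 / β))


/-! Put `h = max δ (1/β)`. Smoothness yields a ball `closedBall c h ⊆ C` with `‖q - c‖ ≤ h - δ`: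
if the largest ball around `q` inside `C` has radius `t < 1/β`, take the `1/β`-ball attached to
the boundary point nearest to `q`. Since `c + h • nᵢ ∈ C`, every separating normal satisfies
`⟪nᵢ, xᵢ - c⟫ ≥ h`, so each step decreases `‖xᵢ - c‖²` by at least `h²`. Finally `x N` lies
outside the open ball `ball c h ⊆ interior C`, whence `(N + 1) h² ≤ ‖x 0 - c‖² ≤ (R + h - δ)²`. -/

section NormalCone

variable {C : Set F} {z n : F}

theorem smul_mem_normalCone_s11 {a : ℝ} (ha : 0 ≤ a) (hn : n ∈ normalCone C z) :
    a • n ∈ normalCone C z := fun y hy => by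
  rw [real_inner_smul_left]
  exact mul_nonpos_of_nonneg_of_nonpos ha (hn y hy)

theorem exists_norm_eq_one_mem_normalCone (hn : n ∈ normalCone C z) (hn0 : n ≠ 0) :
    ∃ u ∈ normalCone C z, ‖u‖ = 1 :=
  ⟨‖n‖⁻¹ • n, smul_mem_normalCone_s11 (by positivity) hn, norm_smul_inv_norm hn0⟩

theorem eq_zero_of_mem_normalCone_of_mem_interior (hz : z ∈ interior C)
    (hn : n ∈ normalCone C z) : n = 0 := by
  obtain ⟨r, hr, hball⟩ := Metric.isOpen_iff.mp isOpen_interior z hz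
  by_contra hn0
  have hpos : 0 < ‖n‖ := norm_pos_iff.mpr hn0
  set s := r / (2 * ‖n‖)
  have hs : 0 < s := by positivity
  have hsn : s * ‖n‖ = r / 2 := by simp only [s]; field_simp
  have hmem : z + s • n ∈ C := by
    refine interior_subset (hball ?_)
    rw [mem_ball, dist_eq_norm, add_sub_cancel_left, norm_smul, Real.norm_of_nonneg hs.le]
    linarith
  have := hn _ hmem
  rw [add_sub_cancel_left, real_inner_smul_right, real_inner_self_eq_norm_sq] at this
  nlinarith [pow_pos hpos 2]

theorem mem_frontier_of_mem_normalCone_s11 (hz : z ∈ C) (hn : n ∈ normalCone C z) (hn0 : n ≠ 0) :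
    z ∈ frontier C :=
  ⟨subset_closure hz, fun hint => hn0 (eq_zero_of_mem_normalCone_of_mem_interior hint hn)⟩

variable [CompleteSpace F]

theorem exists_mem_frontier_mem_normalCone (hcl : IsClosed C) (hcv : Convex ℝ C)
    (hne : C.Nonempty) (hC : C ≠ univ) :
    ∃ z ∈ frontier C, ∃ n ∈ normalCone C z, ‖n‖ = 1 := by
  obtain ⟨p, hp⟩ := nonempty_compl.mpr hC
  obtain ⟨z, hz, hmin⟩ := exists_norm_eq_iInf_of_complete_convex hne hcl.isComplete hcv p
  have hpz : p - z ∈ normalCone C z := (norm_eq_iInf_iff_real_inner_le_zero hcv hz).mp hmin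
  have hpz0 : p - z ≠ 0 := sub_ne_zero.mpr fun h => hp (h ▸ hz)
  exact ⟨z, mem_frontier_of_mem_normalCone_s11 hz hpz hpz0,
    exists_norm_eq_one_mem_normalCone hpz hpz0⟩

theorem exists_norm_eq_one_mem_normalCone_of_notMem_interior (hcv : Convex ℝ C)
    (hint : (interior C).Nonempty) (hz : z ∉ interior C) :
    ∃ n ∈ normalCone C z, ‖n‖ = 1 := by
  obtain ⟨f, u, hf0, hfC, hfz⟩ := geometric_hahn_banach_of_nonempty_interior hcv
    (convex_singleton z) (disjoint_singleton_right.mpr hz) hint (singleton_nonempty z)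
  set w := (InnerProductSpace.toDual ℝ F).symm f
  have hw : w ∈ normalCone C z := fun y hy => by
    rw [inner_sub_right, InnerProductSpace.toDual_symm_apply,
      InnerProductSpace.toDual_symm_apply]
    linarith [hfC y hy, hfz z rfl]
  exact exists_norm_eq_one_mem_normalCone hw (by simpa [w] using hf0)

end NormalCone

theorem IsSmoothSet.interior_nonempty [CompleteSpace F] {β : ℝ} {C : Set F} (hβ : 0 < β)
    (hsm : IsSmoothSet β C) (hcl : IsClosed C) (hcv : Convex ℝ C) (hne : C.Nonempty)
    (hC : C ≠ univ) : (interior C).Nonempty := by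
  obtain ⟨z, hz, n, hn, hn1⟩ := exists_mem_frontier_mem_normalCone hcl hcv hne hC
  exact ⟨_, interior_mono (hsm z hz n hn hn1)
    (ball_subset_interior_closedBall (mem_ball_self (by positivity)))⟩

theorem norm_sub_sub_smul_le {q z n : F} {r s : ℝ} (hn : ‖n‖ = 1) (hqz : ‖q - z‖ ≤ r)
    (hinner : ⟪n, q - z⟫ ≤ -r) (hrs : r ≤ s) : ‖q - (z - s • n)‖ ≤ s - r := by
  have hr : 0 ≤ r := (norm_nonneg _).trans hqz
  have hexpand : ‖q - (z - s • n)‖ ^ 2 = ‖q - z‖ ^ 2 + 2 * s * ⟪n, q - z⟫ + s ^ 2 := by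
    rw [sub_sub_eq_add_sub, add_sub_right_comm, norm_add_sq_real, real_inner_smul_right,
      real_inner_comm, norm_smul, hn, Real.norm_of_nonneg (hr.trans hrs)]
    ring
  refine le_of_pow_le_pow_left₀ two_ne_zero (by linarith) ?_
  rw [hexpand]
  nlinarith [norm_nonneg (q - z)]

theorem IsSmoothSet.exists_closedBall_subset [FiniteDimensional ℝ F] {β δ : ℝ} {C : Set F}
    {q : F} (hβ : 0 < β) (hδ : 0 ≤ δ) (hsm : IsSmoothSet β C) (hcl : IsClosed C)
    (hcv : Convex ℝ C) (hq : closedBall q δ ⊆ C) (hC : C ≠ univ) :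
    ∃ c, closedBall c (max δ (1 / β)) ⊆ C ∧ ‖q - c‖ ≤ max δ (1 / β) - δ := by
  have hqC : q ∈ C := hq (mem_closedBall_self hδ)
  set t := infDist q Cᶜ
  have hball : closedBall q t ⊆ C := hcl.closure_eq ▸ closedBall_infDist_compl_subset_closure hqC
  have hδt : δ ≤ t := (le_infDist (nonempty_compl.mpr hC)).mpr fun y hy => by
    by_contra! hyq
    exact hy (hq (mem_closedBall'.mpr hyq.le))
  rcases le_or_gt (max δ (1 / β)) t with hht | hth
  · exact ⟨q, (closedBall_subset_closedBall hht).trans hball, by simp⟩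
  have htβ : t < 1 / β := (lt_max_iff.mp hth).resolve_left hδt.not_gt
  rw [max_eq_right (hδt.trans htβ.le)]
  -- `z ∈ ∂C` is nearest to `q`; as `closedBall q t ⊆ C`, every unit normal `n` at `z` satisfies
  -- `⟪n, q - z⟫ ≤ -t`, which puts the smoothness ball at `z` within `1/β - t` of `q`.
  obtain ⟨z, hz, hqz⟩ := exists_mem_frontier_infDist_compl_eq_dist hqC hC
  obtain ⟨n, hn, hn1⟩ := exists_norm_eq_one_mem_normalCone_of_notMem_interior hcv
    (hsm.interior_nonempty hβ hcl hcv ⟨q, hqC⟩ hC) hz.2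
  have hinner : ⟪n, q - z⟫ ≤ -t := by
    have hmem : q + t • n ∈ C := hball <| by
      rw [mem_closedBall, dist_eq_norm, add_sub_cancel_left, norm_smul, hn1, mul_one,
        Real.norm_of_nonneg (hδ.trans hδt)]
    have := hn _ hmem
    rw [add_sub_right_comm, inner_add_right, real_inner_smul_right, real_inner_self_eq_norm_sq,
      hn1] at this
    linarith
  refine ⟨z - (1 / β) • n, hsm z hz n hn hn1, ?_⟩
  have hqz' : ‖q - z‖ ≤ t := (dist_eq_norm q z ▸ hqz).ge
  exact (norm_sub_sub_smul_le hn1 hqz' hinner htβ.le).trans (by linarith)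

theorem norm_sub_smul_sub_sq_le {C : Set F} {c x n : F} {h : ℝ} (hh : 0 ≤ h)
    (hc : closedBall c h ⊆ C) (hn : ‖n‖ = 1) (hsep : ∀ y ∈ C, ⟪n, y - x⟫ ≤ 0) :
    ‖x - h • n - c‖ ^ 2 ≤ ‖x - c‖ ^ 2 - h ^ 2 := by
  have hinner : h ≤ ⟪n, x - c⟫ := by
    have hmem : c + h • n ∈ C := hc <| by
      rw [mem_closedBall, dist_eq_norm, add_sub_cancel_left, norm_smul, hn, mul_one,
        Real.norm_of_nonneg hh]
    have := hsep _ hmem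
    rw [show c + h • n - x = h • n - (x - c) by abel, inner_sub_right, real_inner_smul_right,
      real_inner_self_eq_norm_sq, hn] at this
    linarith
  rw [sub_right_comm, norm_sub_sq_real, real_inner_smul_right, real_inner_comm, norm_smul, hn,
    Real.norm_of_nonneg hh]
  nlinarith

theorem le_sub_mul_of_forall_lt_le_sub {a : ℕ → ℝ} {b : ℝ} {N : ℕ}
    (h : ∀ i < N, a (i + 1) ≤ a i - b) : a N ≤ a 0 - N * b := by
  induction N with
  | zero => simp
  | succ k ih =>
    push_cast
    linarith [h k k.lt_succ_self, ih fun i hi => h i (hi.trans k.lt_succ_self)]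

theorem separating_hyperplane_stopping_general {d : ℕ} (β δ R : ℝ)
    (hβ : 0 < β) (hδ : 0 ≤ δ)
    (C : Set (EuclideanSpace ℝ (Fin d))) (hcl : IsClosed C)
    (hcv : Convex ℝ C) (hsm : IsSmoothSet β C)
    (q : EuclideanSpace ℝ (Fin d)) (hq : closedBall q δ ⊆ C)
    (N : ℕ) (x n : ℕ → EuclideanSpace ℝ (Fin d))
    (hx0 : ‖x 0 - q‖ ≤ R)
    (hn : ∀ i < N, ‖n i‖ = 1 ∧ ∀ y ∈ C, ⟪n i, y - x i⟫ ≤ 0)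
    (hiter : ∀ i < N, x (i + 1) = x i - max δ (1 / β) • n i)
    (hxN : x N ∉ interior C) :
    ((N : ℝ) + 1) * max δ (1 / β) ^ 2 ≤ (R + max δ (1 / β) - δ) ^ 2 := by
  set h := max δ (1 / β)
  have hh : 0 < h := lt_max_of_lt_right (by positivity)
  have hC : C ≠ univ := by
    rintro rfl
    exact hxN (by simp)
  obtain ⟨c, hcC, hqc⟩ := hsm.exists_closedBall_subset hβ hδ hcl hcv hq hC
  have hdescent : ∀ i < N, ‖x (i + 1) - c‖ ^ 2 ≤ ‖x i - c‖ ^ 2 - h ^ 2 := fun i hi => by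
    rw [hiter i hi]
    exact norm_sub_smul_sub_sq_le hh.le hcC (hn i hi).1 (hn i hi).2
  have hlast : h ≤ ‖x N - c‖ := by
    by_contra! hlt
    rw [← dist_eq_norm, ← mem_ball] at hlt
    exact hxN (interior_mono hcC (ball_subset_interior_closedBall hlt))
  have hfirst : ‖x 0 - c‖ ≤ R + h - δ := by
    linarith [norm_sub_le_norm_sub_add_norm_sub (x 0) q c]
  have htotal := le_sub_mul_of_forall_lt_le_sub (a := fun i => ‖x i - c‖ ^ 2) hdescent
  nlinarith [pow_le_pow_left₀ hh.le hlast 2, pow_le_pow_left₀ (norm_nonneg _) hfirst 2]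

/-- Stopping-time guarantee for the constant-step separating hyperplane method with
stepsize `h = max δ (1/β)`: if the final iterate `x N` is still not interior to `C`,
then `(N+1) h² ≤ (R + h - δ)²`. -/
theorem separating_hyperplane_stopping {d : ℕ} (hd : 1 ≤ d) (β δ R : ℝ)
    (hβ : 0 < β) (hδ : 0 ≤ δ) (hR : 0 < R)
    (C : Set (EuclideanSpace ℝ (Fin d))) (hne : C.Nonempty) (hcl : IsClosed C)
    (hcv : Convex ℝ C) (hsm : IsSmoothSet β C)
    (q : EuclideanSpace ℝ (Fin d)) (hq : closedBall q δ ⊆ C)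
    (N : ℕ) (x n : ℕ → EuclideanSpace ℝ (Fin d))
    (hx0 : ‖x 0 - q‖ ≤ R)
    (hn : ∀ i < N, ‖n i‖ = 1 ∧ ∀ y ∈ C, ⟪n i, y - x i⟫ ≤ 0)
    (hiter : ∀ i < N, x (i + 1) = x i - max δ (1 / β) • n i)
    (hxN : x N ∉ interior C) :
    ((N : ℝ) + 1) * max δ (1 / β) ^ 2 ≤ (R + max δ (1 / β) - δ) ^ 2 :=
  separating_hyperplane_stopping_general β δ R hβ hδ C hcl hcv hsm q hq N x n hx0 hn hiter hxN
end
end
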